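/- The series ∑_{n=0}^∞ 1/((2n+1)³·C(2n,n)) equals the integral 2·∫₀¹ [Li₂(x/(1+x²)) − Li₂(−x/(1+x²))]/(1+x²) dx. -/

import Mathlib

/-!
For real `t` the odd part of the dilogarithm series gives
`Li₂ t - Li₂ (-t) = 2 ∑ t^(2m+1) / (2m+1)²`, and `|x / (1 + x²)| ≤ 1/2` for every real `x`, so the
integrand is a uniformly convergent series of the kernels `k_m x = (x / (1 + x²))^(2m+1) / (1 + x²)`
and may be integrated termwise. For `I_m = ∫₀¹ k_m` the function
`x^(2m+2) (x² - 1) / (1 + x²)^(2m+3)` vanishes at `0` and `1` and has derivative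
`(8m + 12) k_{m+1} - 2(m + 1) k_m`, so `(4m + 6) I_{m+1} = (m + 1) I_m` with `I_0 = 1/4`.
This is the recurrence of `1 / (4 (2m+1) C(2m,m))`, and
`2 · 2/(2m+1)² · I_m = 1 / ((2m+1)³ C(2m,m))`.
-/

/-- Polylogarithm of a real argument, defined by its convergent series. -/
noncomputable def rLi (s : ℕ) (x : ℝ) : ℝ := ∑' n : ℕ, x ^ (n + 1) / ((n : ℝ) + 1) ^ s

open intervalIntegral

theorem summable_rLi_series {s : ℕ} (hs : 2 ≤ s) {t : ℝ} (ht : |t| ≤ 1) :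
    Summable fun n : ℕ => t ^ (n + 1) / ((n : ℝ) + 1) ^ s := by
  have hp : Summable fun n : ℕ => 1 / ((n : ℝ) + 1) ^ s := by
    simpa using (summable_nat_add_iff 1).mpr (Real.summable_one_div_nat_pow.mpr hs)
  refine hp.of_norm_bounded fun n => ?_
  rw [norm_div, norm_pow, norm_pow, Real.norm_eq_abs, Real.norm_eq_abs,
    abs_of_pos (n.cast_add_one_pos : (0 : ℝ) < n + 1)]
  gcongr
  exact pow_le_one₀ (abs_nonneg t) ht

theorem hasSum_rLi_sub_rLi_neg {s : ℕ} (hs : 2 ≤ s) {t : ℝ} (ht : |t| ≤ 1) :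
    HasSum (fun m : ℕ => 2 * t ^ (2 * m + 1) / (2 * (m : ℝ) + 1) ^ s) (rLi s t - rLi s (-t)) := by
  have hsum := (summable_rLi_series hs ht).hasSum.sub
    (summable_rLi_series hs (t := -t) (by rwa [abs_neg])).hasSum
  have hodd_vanish : ∀ n : ℕ, n ∉ Set.range (fun k : ℕ => 2 * k) →
      t ^ (n + 1) / ((n : ℝ) + 1) ^ s - (-t) ^ (n + 1) / ((n : ℝ) + 1) ^ s = 0 := by
    intro n hn
    obtain ⟨k, rfl⟩ : Odd n := Nat.not_even_iff_odd.mp fun ⟨k, hk⟩ => hn ⟨k, by dsimp only; omega⟩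
    rw [Even.neg_pow ⟨k + 1, by ring⟩, sub_self]
  rw [← (mul_right_injective₀ two_ne_zero).hasSum_iff hodd_vanish] at hsum
  refine hsum.congr_fun fun m => ?_
  simp only [Function.comp_apply, Nat.cast_mul, Nat.cast_ofNat,
    Odd.neg_pow (⟨m, rfl⟩ : Odd (2 * m + 1))]
  ring

noncomputable def chenKernel (m : ℕ) (x : ℝ) : ℝ := (x / (1 + x ^ 2)) ^ (2 * m + 1) / (1 + x ^ 2)

@[fun_prop]
theorem continuous_chenKernel (m : ℕ) : Continuous (chenKernel m) :=
  ((continuous_id.div (by fun_prop) fun x => by positivity).pow _).div (by fun_prop)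
    fun x => by positivity

theorem abs_div_one_add_sq_le_half (x : ℝ) : |x / (1 + x ^ 2)| ≤ 1 / 2 := by
  rw [abs_div, abs_of_pos (by positivity : (0 : ℝ) < 1 + x ^ 2), div_le_iff₀ (by positivity)]
  nlinarith [sq_nonneg (|x| - 1), sq_abs x]

theorem abs_chenKernel_le (m : ℕ) (x : ℝ) : |chenKernel m x| ≤ (1 / 2) ^ (2 * m + 1) := by
  have hx : (1 : ℝ) ≤ 1 + x ^ 2 := le_add_of_nonneg_right (sq_nonneg x)
  rw [chenKernel, abs_div, abs_pow, abs_of_pos (by positivity : (0 : ℝ) < 1 + x ^ 2)]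
  calc |x / (1 + x ^ 2)| ^ (2 * m + 1) / (1 + x ^ 2) ≤ |x / (1 + x ^ 2)| ^ (2 * m + 1) :=
        div_le_self (by positivity) hx
    _ ≤ (1 / 2) ^ (2 * m + 1) := by gcongr; exact abs_div_one_add_sq_le_half x

theorem hasSum_chenKernel (x : ℝ) :
    HasSum (fun m : ℕ => 2 / (2 * (m : ℝ) + 1) ^ 2 * chenKernel m x)
      ((rLi 2 (x / (1 + x ^ 2)) - rLi 2 (-(x / (1 + x ^ 2)))) / (1 + x ^ 2)) := by
  have ht : |x / (1 + x ^ 2)| ≤ 1 := (abs_div_one_add_sq_le_half x).trans (by norm_num)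
  refine ((hasSum_rLi_sub_rLi_neg le_rfl ht).div_const (1 + x ^ 2)).congr_fun fun m => ?_
  rw [chenKernel]
  ring

theorem hasSum_integral_chenKernel :
    HasSum (fun m : ℕ => 2 / (2 * (m : ℝ) + 1) ^ 2 * ∫ x in (0 : ℝ)..1, chenKernel m x)
      (∫ x in (0 : ℝ)..1, (rLi 2 (x / (1 + x ^ 2)) - rLi 2 (-(x / (1 + x ^ 2)))) / (1 + x ^ 2)) := by
  have hbound (m : ℕ) (x : ℝ) : ‖2 / (2 * (m : ℝ) + 1) ^ 2 * chenKernel m x‖ ≤ (1 / 4) ^ m := by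
    have hcoef : 2 / (2 * (m : ℝ) + 1) ^ 2 ≤ 2 :=
      div_le_self zero_le_two (one_le_pow₀ (by linarith [m.cast_nonneg (α := ℝ)]))
    rw [norm_mul, Real.norm_of_nonneg (by positivity), Real.norm_eq_abs]
    calc 2 / (2 * (m : ℝ) + 1) ^ 2 * |chenKernel m x| ≤ 2 * (1 / 2) ^ (2 * m + 1) :=
          mul_le_mul hcoef (abs_chenKernel_le m x) (abs_nonneg _) zero_le_two
      _ = (1 / 4) ^ m := by rw [pow_succ, pow_mul]; ring
  simp_rw [← integral_const_mul]
  exact hasSum_integral_of_dominated_convergence (fun m _ => (1 / 4 : ℝ) ^ m)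
    (fun m => (by fun_prop : Continuous _).aestronglyMeasurable)
    (fun m => MeasureTheory.ae_of_all _ fun x _ => hbound m x)
    (MeasureTheory.ae_of_all _ fun _ _ => summable_geometric_of_lt_one (by norm_num) (by norm_num))
    intervalIntegrable_const
    (MeasureTheory.ae_of_all _ fun x _ => hasSum_chenKernel x)

-- In `u = x² / (1 + x²)` the antiderivative is `(u (1 - u))^(m+1) (2u - 1)`.
theorem hasDerivAt_antideriv_chenKernel_recurrence (m : ℕ) (x : ℝ) :
    HasDerivAt (fun x : ℝ => x ^ (2 * m + 2) * (x ^ 2 - 1) / (1 + x ^ 2) ^ (2 * m + 3))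
      ((8 * m + 12) * chenKernel (m + 1) x - 2 * (m + 1) * chenKernel m x) x := by
  have hx : (1 + x ^ 2) ≠ 0 := by positivity
  refine (((hasDerivAt_pow (2 * m + 2) x).fun_mul ((hasDerivAt_pow 2 x).sub_const 1)).fun_div
    (((hasDerivAt_pow 2 x).const_add 1).fun_pow (2 * m + 3)) (pow_ne_zero _ hx)).congr_deriv ?_
  simp only [chenKernel, div_pow, Nat.cast_ofNat]
  field_simp
  push_cast
  ring

theorem hasDerivAt_antideriv_chenKernel_zero (x : ℝ) :
    HasDerivAt (fun x : ℝ => x ^ 2 / (2 * (1 + x ^ 2))) (chenKernel 0 x) x := by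
  have hx : (1 + x ^ 2) ≠ 0 := by positivity
  refine ((hasDerivAt_pow 2 x).fun_div (((hasDerivAt_pow 2 x).const_add 1).const_mul 2)
    (by positivity)).congr_deriv ?_
  simp only [chenKernel, Nat.cast_ofNat, Nat.add_one_sub_one, pow_one, mul_zero, zero_add]
  field_simp
  ring

theorem integral_chenKernel_succ (m : ℕ) :
    (4 * m + 6) * ∫ x in (0 : ℝ)..1, chenKernel (m + 1) x =
      (m + 1) * ∫ x in (0 : ℝ)..1, chenKernel m x := by
  have hFTC := integral_eq_sub_of_hasDerivAt
    (fun x _ => hasDerivAt_antideriv_chenKernel_recurrence m x)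
    ((by fun_prop : Continuous _).intervalIntegrable 0 1)
  rw [integral_sub ((by fun_prop : Continuous _).intervalIntegrable 0 1)
    ((by fun_prop : Continuous _).intervalIntegrable 0 1), integral_const_mul,
    integral_const_mul] at hFTC
  norm_num at hFTC
  linarith

theorem integral_chenKernel (m : ℕ) :
    ∫ x in (0 : ℝ)..1, chenKernel m x = 1 / (4 * (2 * m + 1) * Nat.centralBinom m) := by
  induction m with
  | zero =>
    rw [integral_eq_sub_of_hasDerivAt (fun x _ => hasDerivAt_antideriv_chenKernel_zero x)
      ((continuous_chenKernel 0).intervalIntegrable 0 1)]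
    norm_num
  | succ m ih =>
    have hrec := integral_chenKernel_succ m
    have hbinom : ((m : ℝ) + 1) * Nat.centralBinom (m + 1) =
        2 * (2 * m + 1) * Nat.centralBinom m := by
      exact_mod_cast Nat.succ_mul_centralBinom_succ m
    have hpos : (0 : ℝ) < Nat.centralBinom m := by exact_mod_cast Nat.centralBinom_pos _
    have hpos' : (0 : ℝ) < Nat.centralBinom (m + 1) := by exact_mod_cast Nat.centralBinom_pos _
    set I := ∫ x in (0 : ℝ)..1, chenKernel (m + 1) x
    rw [ih] at hrec
    push_cast
    field_simp at hrec ⊢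
    refine mul_left_cancel₀ m.cast_add_one_ne_zero ?_
    linear_combination hrec + 4 * (2 * m + 3) * I * hbinom

theorem chen_series_one_integral_rep :
    (∑' n : ℕ, 1 / ((2 * (n : ℝ) + 1) ^ 3 * (Nat.centralBinom n : ℝ))) =
      2 * ∫ x in (0 : ℝ)..1,
        (rLi 2 (x / (1 + x ^ 2)) - rLi 2 (-(x / (1 + x ^ 2)))) / (1 + x ^ 2) := by
  rw [← (hasSum_integral_chenKernel.mul_left 2).tsum_eq]
  refine tsum_congr fun n => ?_
  have hpos : (0 : ℝ) < Nat.centralBinom n := by exact_mod_cast Nat.centralBinom_pos n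
  rw [integral_chenKernel]
  field_simp
  ring
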